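/- Every graph that contains no induced subgraph isomorphic to the claw K_{1,3} and has no K_5 minor has maximum degree at most 6. -/

import Mathlib

open SimpleGraph

/-- `H` is a minor of `G`: there is a family of pairwise disjoint nonempty connected
branch sets in `G`, one for each vertex of `H`, with an edge of `G` between the branch
sets of any two adjacent vertices of `H`. -/
def SimpleGraph.HasMinor {V W : Type*} (G : SimpleGraph V) (H : SimpleGraph W) : Prop :=
  ∃ f : W → Set V,
    (∀ w, (f w).Nonempty) ∧
    (∀ w, (G.induce (f w)).Connected) ∧
    (∀ w₁ w₂, w₁ ≠ w₂ → Disjoint (f w₁) (f w₂)) ∧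
    (∀ w₁ w₂, H.Adj w₁ w₂ → ∃ v₁ ∈ f w₁, ∃ v₂ ∈ f w₂, G.Adj v₁ v₂)

/-- `G` contains no induced subgraph isomorphic to the claw `K_{1,3}`. -/
def SimpleGraph.ClawFree {V : Type*} (G : SimpleGraph V) : Prop :=
  IsEmpty (completeBipartiteGraph (Fin 1) (Fin 3) ↪g G)

/-- `s` is a maximal clique of `G`. -/
def SimpleGraph.IsMaxClique {V : Type*} (G : SimpleGraph V) (s : Set V) : Prop :=
  G.IsClique s ∧ ∀ t : Set V, G.IsClique t → s ⊆ t → s = t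

/-- `c` is a clique-coloring of `G`: no maximal clique with at least two vertices
is monochromatic. -/
def SimpleGraph.IsCliqueColoring {V : Type*} (G : SimpleGraph V) {k : ℕ} (c : V → Fin k) : Prop :=
  ∀ s : Set V, G.IsMaxClique s → s.Nontrivial → ∃ u ∈ s, ∃ v ∈ s, c u ≠ c v

/-- `G` is `k`-clique-colorable. -/
def SimpleGraph.CliqueColorable {V : Type*} (G : SimpleGraph V) (k : ℕ) : Prop :=
  ∃ c : V → Fin k, G.IsCliqueColoring c

/-- `G` is an odd cycle, i.e. isomorphic to `C_n` for some odd `n ≥ 3`. -/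
def SimpleGraph.IsOddCycle {V : Type*} (G : SimpleGraph V) : Prop :=
  ∃ n : ℕ, 3 ≤ n ∧ Odd n ∧ Nonempty (G ≃g cycleGraph n)

/-- `D` meets every (nonempty) maximal clique of `G`. -/
def SimpleGraph.IsCliqueTransversal {V : Type*} (G : SimpleGraph V) (D : Set V) : Prop :=
  ∀ s : Set V, G.IsMaxClique s → s.Nonempty → (D ∩ s).Nonempty

/-- `G` is `H`-minor-free, but adding any edge between two distinct nonadjacent
vertices creates an `H` minor. -/
def SimpleGraph.EdgeMaximalMinorFree {V W : Type*} (G : SimpleGraph V) (H : SimpleGraph W) : Prop :=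
  ¬ G.HasMinor H ∧ ∀ u v : V, u ≠ v → ¬ G.Adj u v →
    (G ⊔ fromEdgeSet {s(u, v)}).HasMinor H

/-!
If `v` had seven neighbours, claw-freeness would leave the graph `H` induced on them without
three pairwise non-adjacent vertices, and `v` together with a `K₄` minor of `H` would form a
`K₅` minor. For the `K₄` minor, assume `H` has no `K₄`. Since `R(3, 3) = 6`, `H` contains a
triangle `T`, and the other (at least four) vertices form the fourth branch set `R`. Every
vertex of `T` has a neighbour in `R`, because the non-neighbours of a vertex form a clique.
And `R` is connected: were `R = X ⊔ Y` with no edge across, `X` and `Y` would be cliques with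
each vertex of `T` complete to one of them, so one of the cliques `X ∪ (T ∩ N(X))`,
`Y ∪ (T ∩ N(Y))` would have four vertices.
-/

open Finset

namespace SimpleGraph

variable {V : Type*} {G : SimpleGraph V}

theorem HasMinor.of_embedding {W : Type*} {H : SimpleGraph W} (φ : H ↪g G) : G.HasMinor H :=
  ⟨fun w => {φ w}, fun _ => Set.singleton_nonempty _, fun _ => Connected.of_subsingleton,
    fun _ _ h => Set.disjoint_singleton.mpr (φ.injective.ne h),
    fun w₁ w₂ h => ⟨φ w₁, rfl, φ w₂, rfl, φ.map_adj_iff.mpr h⟩⟩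

theorem IsNClique.hasMinor_induce {n : ℕ} {T : Finset V} (hT : G.IsNClique n T) :
    (G.induce (T : Set V)).HasMinor (⊤ : SimpleGraph (Fin n)) := by
  rw [induce_eq_top.mpr hT.isClique]
  exact HasMinor.of_embedding (Iso.completeGraph (T.equivFinOfCardEq hT.card_eq).symm).toEmbedding

theorem Connected.induce_image_val {s : Set V} {t : Set s}
    (h : ((G.induce s).induce t).Connected) :
    (G.induce (Subtype.val '' t)).Connected :=
  h.map ⟨fun x => ⟨x.1.1, x.1, x.2, rfl⟩, id⟩ <| by
    rintro ⟨_, x, hx, rfl⟩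
    exact ⟨⟨x, hx⟩, rfl⟩

theorem HasMinor.top_succ_of_induce {n : ℕ} {s B : Set V}
    (hs : (G.induce s).HasMinor (⊤ : SimpleGraph (Fin n))) (hB : (G.induce B).Connected)
    (hsB : Disjoint s B) (hadj : ∀ x ∈ s, ∃ y ∈ B, G.Adj x y) :
    G.HasMinor (⊤ : SimpleGraph (Fin (n + 1))) := by
  obtain ⟨f, hne, hconn, hdisj, hadjf⟩ := hs
  have hBf : ∀ i, Disjoint B (Subtype.val '' f i) := fun i =>
    hsB.symm.mono_right (Subtype.coe_image_subset s (f i))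
  have hfB : ∀ i, ∃ x ∈ Subtype.val '' f i, ∃ y ∈ B, G.Adj x y := fun i => by
    obtain ⟨x, hx⟩ := hne i
    obtain ⟨y, hy, hxy⟩ := hadj x x.2
    exact ⟨x, ⟨x, hx, rfl⟩, y, hy, hxy⟩
  refine ⟨Fin.cons B fun i => Subtype.val '' f i, ?_, ?_, ?_, ?_⟩
  · intro w
    cases w using Fin.cases with
    | zero => exact Set.nonempty_coe_sort.mp hB.nonempty
    | succ i => exact (hne i).image _
  · intro w
    cases w using Fin.cases with
    | zero => exact hB
    | succ i => exact (hconn i).induce_image_val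
  · intro w₁ w₂ hw
    cases w₁ using Fin.cases <;> cases w₂ using Fin.cases
    · exact absurd rfl hw
    · exact hBf _
    · exact (hBf _).symm
    · exact (Set.disjoint_image_iff Subtype.val_injective).mpr
        (hdisj _ _ fun h => hw (congrArg Fin.succ h))
  · intro w₁ w₂ hw
    cases w₁ using Fin.cases <;> cases w₂ using Fin.cases
    · exact absurd rfl hw
    · obtain ⟨x, hx, y, hy, hxy⟩ := hfB _
      exact ⟨y, hy, x, hx, hxy.symm⟩
    · exact hfB _
    · obtain ⟨x, hx, y, hy, hxy⟩ := hadjf _ _ fun h => hw (congrArg Fin.succ h)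
      exact ⟨x, ⟨x, hx, rfl⟩, y, ⟨y, hy, rfl⟩, hxy⟩

theorem connected_induce_of_forall_exists_adj {R : Set V} (hR : R.Nonempty)
    (h : ∀ X ⊆ R, X.Nonempty → (R \ X).Nonempty → ∃ x ∈ X, ∃ y ∈ R \ X, G.Adj x y) :
    (G.induce R).Connected := by
  have : Nonempty R := hR.to_subtype
  refine Connected.mk ?_
  rintro ⟨u, hu⟩ ⟨w, hw⟩
  by_contra huw
  obtain ⟨x, ⟨hxR, hux⟩, y, ⟨hyR, hy⟩, hxy⟩ :=
    h {z | ∃ hz : z ∈ R, (G.induce R).Reachable ⟨u, hu⟩ ⟨z, hz⟩} (fun z hz => hz.1)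
      ⟨u, hu, .rfl⟩ ⟨w, hw, fun ⟨_, h⟩ => huw h⟩
  have hxy' : (G.induce R).Adj ⟨x, hxR⟩ ⟨y, hyR⟩ := hxy
  exact hy ⟨hyR, hux.trans hxy'.reachable⟩

theorem CliqueFree.card_lt_of_isClique {n : ℕ} (h : G.CliqueFree n) {s : Finset V}
    (hs : G.IsClique (s : Set V)) : #s < n := by
  by_contra! hn
  obtain ⟨t, hts, rfl⟩ := exists_subset_card_eq hn
  exact h t ⟨hs.subset (by simpa using hts), rfl⟩

theorem isClique_compl_neighborSet (h : Gᶜ.CliqueFree 3) (v : V) :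
    G.IsClique (Gᶜ.neighborSet v) :=
  (isIndepSet_compl G).mp (isIndepSet_neighborSet_of_triangleFree Gᶜ h v)

theorem degree_lt_of_cliqueFree_compl [Fintype V] [DecidableRel G.Adj] {n : ℕ}
    (h : G.CliqueFree 3) (hc : Gᶜ.CliqueFree n) (v : V) : G.degree v < n := by
  rw [← card_neighborFinset_eq_degree]
  exact hc.card_lt_of_isClique <| by
    simpa using (isClique_compl G).mpr (isIndepSet_neighborSet_of_triangleFree G h v)

theorem card_lt_six_of_cliqueFree_three [Fintype V] (h : G.CliqueFree 3) (hc : Gᶜ.CliqueFree 3) :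
    Fintype.card V < 6 := by
  classical
  by_contra! hV
  obtain ⟨v⟩ : Nonempty V := Fintype.card_pos_iff.mp (by omega)
  have hG := degree_lt_of_cliqueFree_compl h hc v
  have hGc := degree_lt_of_cliqueFree_compl hc (by rwa [compl_compl]) v
  have := G.degree_compl v
  omega

theorem card_add_card_lt_of_forall_adj {n : ℕ} (h : G.CliqueFree n)
    {X K : Finset V} (hX : G.IsClique (X : Set V)) (hK : G.IsClique (K : Set V))
    (hXK : Disjoint X K) (hadj : ∀ x ∈ X, ∀ k ∈ K, G.Adj x k) : #X + #K < n := by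
  classical
  rw [← card_union_of_disjoint hXK]
  refine h.card_lt_of_isClique ?_
  rw [coe_union]
  exact Set.pairwise_union.mpr
    ⟨hX, hK, fun x hx k hk _ => ⟨hadj x hx k hk, (hadj x hx k hk).symm⟩⟩

section IndependenceNumberTwo

variable (hK4 : G.CliqueFree 4) (hα : Gᶜ.CliqueFree 3)
include hK4 hα

theorem exists_adj_of_four_le_card {v : V} {s : Finset V} (hv : v ∉ s) (hs : 4 ≤ #s) :
    ∃ w ∈ s, G.Adj v w := by
  by_contra! hnadj
  have hsc : G.IsClique (s : Set V) := (isClique_compl_neighborSet hα v).subset fun w hw =>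
    (compl_adj G v w).mpr ⟨fun h => hv (h ▸ hw), hnadj w hw⟩
  have := hK4.card_lt_of_isClique hsc
  omega

theorem card_add_card_add_card_le_six {T X Y : Finset V}
    (hT : G.IsClique (T : Set V)) (hX : X.Nonempty) (hY : Y.Nonempty) (hXY : Disjoint X Y)
    (hXT : Disjoint X T) (hYT : Disjoint Y T) (hnadj : ∀ x ∈ X, ∀ y ∈ Y, ¬G.Adj x y) :
    #X + #Y + #T ≤ 6 := by
  classical
  obtain ⟨p, hp⟩ := hX
  obtain ⟨q, hq⟩ := hY
  have hXc : G.IsClique (X : Set V) := (isClique_compl_neighborSet hα q).subset fun x hx =>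
    (compl_adj G q x).mpr
      ⟨fun h => Finset.disjoint_left.mp hXY (h ▸ hx) hq, fun h => hnadj x hx q hq h.symm⟩
  have hYc : G.IsClique (Y : Set V) := (isClique_compl_neighborSet hα p).subset fun y hy =>
    (compl_adj G p y).mpr ⟨fun h => Finset.disjoint_left.mp hXY hp (h ▸ hy), hnadj p hp y hy⟩
  have hsplit : ∀ t ∈ T, (∀ x ∈ X, G.Adj x t) ∨ (∀ y ∈ Y, G.Adj y t) := by
    intro t ht
    by_contra! ⟨⟨x, hx, hxt⟩, ⟨y, hy, hyt⟩⟩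
    refine hnadj x hx y hy (isClique_compl_neighborSet hα t ?_ ?_ ?_)
    · exact (compl_adj G t x).mpr
        ⟨fun h => Finset.disjoint_left.mp hXT (h ▸ hx) ht, fun h => hxt h.symm⟩
    · exact (compl_adj G t y).mpr
        ⟨fun h => Finset.disjoint_left.mp hYT (h ▸ hy) ht, fun h => hyt h.symm⟩
    · exact fun h => Finset.disjoint_left.mp hXY hx (h ▸ hy)
  set KX := T.filter fun t => ∀ x ∈ X, G.Adj x t
  set KY := T.filter fun t => ∀ y ∈ Y, G.Adj y t
  have hKX := card_add_card_lt_of_forall_adj (K := KX) hK4 hXc (hT.subset (filter_subset _ T))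
    (hXT.mono_right (filter_subset _ T)) fun x hx t ht => (Finset.mem_filter.mp ht).2 x hx
  have hKY := card_add_card_lt_of_forall_adj (K := KY) hK4 hYc (hT.subset (filter_subset _ T))
    (hYT.mono_right (filter_subset _ T)) fun y hy t ht => (Finset.mem_filter.mp ht).2 y hy
  have hTK : #T ≤ #KX + #KY := (card_le_card fun t ht => by
    simpa [KX, KY, ht] using hsplit t ht).trans (card_union_le KX KY)
  omega

theorem connected_induce_compl_of_isNClique [Fintype V] [DecidableEq V] {T : Finset V}
    (hT : G.IsNClique 3 T) (hR : 4 ≤ #Tᶜ) : (G.induce (Tᶜ : Finset V)).Connected := by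
  classical
  refine connected_induce_of_forall_exists_adj (coe_nonempty.mpr (card_pos.mp (by omega))) ?_
  intro X hX hXne hYne
  by_contra! hno
  obtain ⟨x, hx⟩ := hXne
  obtain ⟨y, hyR, hyX⟩ := hYne
  have := card_add_card_add_card_le_six hK4 hα hT.isClique (X := Tᶜ.filter (· ∈ X))
    (Y := Tᶜ.filter (· ∉ X)) ⟨x, mem_filter.mpr ⟨hX hx, hx⟩⟩
    ⟨y, mem_filter.mpr ⟨hyR, hyX⟩⟩
    (disjoint_filter_filter_not _ _ _) (disjoint_compl_left.mono_left (filter_subset _ _))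
    (disjoint_compl_left.mono_left (filter_subset _ _)) fun x hx y hy =>
      hno x (mem_filter.mp hx).2 y ⟨mem_coe.mpr (mem_filter.mp hy).1, (mem_filter.mp hy).2⟩
  rw [card_filter_add_card_filter_not, hT.card_eq] at this
  omega

end IndependenceNumberTwo

theorem hasMinor_top_four_of_indepSetFree_three [Fintype V] (h : G.IndepSetFree 3)
    (hV : 7 ≤ Fintype.card V) : G.HasMinor (⊤ : SimpleGraph (Fin 4)) := by
  classical
  by_cases hK4 : G.CliqueFree 4
  swap
  · exact HasMinor.of_embedding (topEmbeddingOfNotCliqueFree hK4)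
  have hα : Gᶜ.CliqueFree 3 := (cliqueFree_compl G).mpr h
  obtain ⟨T, hT⟩ : ∃ T, G.IsNClique 3 T := by
    by_contra! hT
    have := card_lt_six_of_cliqueFree_three hT hα
    omega
  have hR : 4 ≤ #Tᶜ := by rw [card_compl, hT.card_eq]; omega
  refine hT.hasMinor_induce.top_succ_of_induce (connected_induce_compl_of_isNClique hK4 hα hT hR)
    (disjoint_coe.mpr disjoint_compl_right) fun x hx => ?_
  obtain ⟨y, hy, hxy⟩ := exists_adj_of_four_le_card hK4 hα (notMem_compl.mpr hx) hR
  exact ⟨y, hy, hxy⟩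

theorem ClawFree.indepSetFree_induce_neighborSet (h : G.ClawFree) (v : V) :
    (G.induce (G.neighborSet v)).IndepSetFree 3 := by
  classical
  intro t ht
  obtain ⟨a, b, c, hab, hac, hbc, rfl⟩ := Finset.card_eq_three.mp ht.card_eq
  have hab' : ¬G.Adj a b := ht.isIndepSet (by simp) (by simp) hab
  have hac' : ¬G.Adj a c := ht.isIndepSet (by simp) (by simp) hac
  have hbc' : ¬G.Adj b c := ht.isIndepSet (by simp) (by simp) hbc
  have hva : G.Adj v a := a.2
  have hvb : G.Adj v b := b.2
  have hvc : G.Adj v c := c.2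
  rw [← Subtype.coe_ne_coe] at hab hac hbc
  let f : Fin 1 ⊕ Fin 3 → V := Sum.elim (fun _ => v) ![a, b, c]
  have hinj : f.Injective := by
    rintro (x | x) (y | y) hxy <;> fin_cases x <;> try fin_cases y
    all_goals simp_all [f, hva.ne, hvb.ne, hvc.ne, hva.ne', hvb.ne', hvc.ne', hab.symm, hac.symm,
      hbc.symm]
  have hadj : ∀ x y, G.Adj (f x) (f y) ↔ (completeBipartiteGraph (Fin 1) (Fin 3)).Adj x y := by
    rintro (x | x) (y | y) <;> fin_cases x <;> try fin_cases y
    all_goals simp_all [f, completeBipartiteGraph, adj_comm]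
  exact h.false ⟨⟨f, hinj⟩, hadj _ _⟩

end SimpleGraph

/-- Every claw-free, `K₅`-minor-free graph has maximum degree at most 6. -/
theorem claw_free_K5_minor_free_max_degree_six {V : Type*} [Fintype V]
    (G : SimpleGraph V) [DecidableRel G.Adj]
    (hclaw : G.ClawFree) (hK5 : ¬ G.HasMinor (⊤ : SimpleGraph (Fin 5))) :
    ∀ v : V, G.degree v ≤ 6 := by
  intro v
  by_contra! hdeg
  have hK4 := hasMinor_top_four_of_indepSetFree_three (hclaw.indepSetFree_induce_neighborSet v)
    (by rw [card_neighborSet_eq_degree]; omega)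
  exact hK5 <| hK4.top_succ_of_induce Connected.of_subsingleton
    (Set.disjoint_singleton_right.mpr (G.notMem_neighborSet_self)) fun x hx => ⟨v, rfl, hx.symm⟩
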